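/- arXiv:1508.06102 — 2 statements merged into one kernel-verified Lean document; each statement's English description precedes it below -/
import Mathlib

section
/- For all x, y ∈ ℝ^n with |x| ≤ |y| and all t ∈ (0,1], |x - y|^2 ≤ e · |e^{-t} x - y|^2, where e is Euler's number. -/
theorem mul_norm_sub_sq_le_norm_smul_sub_sq {E : Type*} [NormedAddCommGroup E]
    [InnerProductSpace ℝ E] {x y : E} (hxy : ‖x‖ ≤ ‖y‖) {c : ℝ} (hc : c ≤ 1) :
    c * ‖x - y‖ ^ 2 ≤ ‖c • x - y‖ ^ 2 := by
  have hsq : ‖x‖ ^ 2 ≤ ‖y‖ ^ 2 := pow_le_pow_left₀ (norm_nonneg x) hxy 2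
  have hcx : c * ‖x‖ ^ 2 ≤ ‖y‖ ^ 2 := by nlinarith [sq_nonneg ‖x‖]
  have hdiff : ‖c • x - y‖ ^ 2 - c * ‖x - y‖ ^ 2 = (1 - c) * (‖y‖ ^ 2 - c * ‖x‖ ^ 2) := by
    rw [norm_sub_sq_real, norm_sub_sq_real, norm_smul, real_inner_smul_left, mul_pow,
      Real.norm_eq_abs, sq_abs]
    ring
  nlinarith [mul_nonneg (sub_nonneg.2 hc) (sub_nonneg.2 hcx)]

theorem stmt_1 (n : ℕ) (x y : EuclideanSpace ℝ (Fin n)) (hxy : ‖x‖ ≤ ‖y‖)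
    (t : ℝ) (ht : t ∈ Set.Ioc (0:ℝ) 1) :
    ‖x - y‖ ^ 2 ≤ Real.exp 1 * ‖Real.exp (-t) • x - y‖ ^ 2 := by
  obtain ⟨ht0, ht1⟩ := ht
  have hc : Real.exp (-t) ≤ 1 := Real.exp_le_one_iff.2 (by linarith)
  have key := mul_norm_sub_sq_le_norm_smul_sub_sq hxy hc
  calc ‖x - y‖ ^ 2 = Real.exp t * (Real.exp (-t) * ‖x - y‖ ^ 2) := by
        rw [← mul_assoc, ← Real.exp_add, add_neg_cancel, Real.exp_zero, one_mul]
    _ ≤ Real.exp t * ‖Real.exp (-t) • x - y‖ ^ 2 := by gcongr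
    _ ≤ Real.exp 1 * ‖Real.exp (-t) • x - y‖ ^ 2 := by gcongr
end

section
/- Define the Mehler kernel M_t(x,y) = (1 - e^{-2t})^{-n/2} · exp(-e^{-t}|x-y|^2/(1-e^{-2t})) · exp(e^{-t}(|x|^2+|y|^2)/(1+e^{-t})) for x, y ∈ ℝ^n and t > 0. Then there exists a constant C > 0 (depending only on n) such that for all x, y ∈ ℝ^n and all t ∈ (0,1], M_t(x,y) ≤ C · t^{-n/2} · exp(-|x-y|^2/(4t)) · exp((|x|^2+|y|^2)/2). -/
/-!
Write `v = e^{-t}`. For `t ∈ (0, 1]` each of the three factors of the Mehler kernel is bounded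
separately: `1 - v² ≥ 2e^{-2} t` controls the prefactor, `1 - v² ≤ 4tv` (from `1 - t ≤ v` and
`v ≥ e^{-1} ≥ 1/3`) turns the off-diagonal Gaussian into `exp(-|x-y|²/(4t))`, and
`v / (1 + v) ≤ 1/2` bounds the last factor.
-/

noncomputable def mehler (n : ℕ) (t : ℝ) (x y : EuclideanSpace ℝ (Fin n)) : ℝ :=
  (1 - Real.exp (-2 * t)) ^ (-(n : ℝ) / 2) *
    Real.exp (-(Real.exp (-t) * ‖x - y‖ ^ 2) / (1 - Real.exp (-2 * t))) *
    Real.exp (Real.exp (-t) * (‖x‖ ^ 2 + ‖y‖ ^ 2) / (1 + Real.exp (-t)))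

namespace Real

lemma mul_exp_neg_le_one_sub_exp_neg (u : ℝ) : u * exp (-u) ≤ 1 - exp (-u) := by
  have hinv : exp u * exp (-u) = 1 := by rw [← exp_add, add_neg_cancel, exp_zero]
  nlinarith [add_one_le_exp u, exp_pos (-u)]

lemma exp_neg_two_mul (t : ℝ) : exp (-2 * t) = exp (-t) ^ 2 := by
  rw [← exp_nat_mul]; ring_nf

variable {t : ℝ}

lemma two_mul_exp_neg_two_mul_le_one_sub_exp (ht₀ : 0 ≤ t) (ht₁ : t ≤ 1) :
    2 * exp (-2) * t ≤ 1 - exp (-2 * t) :=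
  calc 2 * exp (-2) * t ≤ 2 * t * exp (-2 * t) := by
        rw [mul_right_comm]
        exact mul_le_mul_of_nonneg_left (exp_le_exp.mpr (by linarith)) (by positivity)
    _ ≤ 1 - exp (-2 * t) := by
        simpa only [neg_mul] using mul_exp_neg_le_one_sub_exp_neg (2 * t)

lemma one_sub_exp_neg_two_mul_le (ht₀ : 0 ≤ t) (ht₁ : t ≤ 1) :
    1 - exp (-2 * t) ≤ 4 * t * exp (-t) := by
  have h_lower : 1 - t ≤ exp (-t) := by linarith [add_one_le_exp (-t)]
  have h_third : 1 / 3 ≤ exp (-t) :=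
    calc (1 : ℝ) / 3 ≤ exp (-1) := by linarith [exp_neg_one_gt_d9]
      _ ≤ exp (-t) := exp_le_exp.mpr (by linarith)
  rw [exp_neg_two_mul]
  -- `1 - v² = (1 - v)(1 + v) ≤ t · 4v`
  nlinarith

lemma one_sub_exp_neg_two_mul_pos (ht : 0 < t) : 0 < 1 - exp (-2 * t) := by
  have : exp (-2 * t) < 1 := exp_lt_one_iff.mpr (by linarith)
  linarith

lemma one_sub_exp_neg_two_mul_rpow_le (ht₀ : 0 < t) (ht₁ : t ≤ 1) {p : ℝ} (hp : p ≤ 0) :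
    (1 - exp (-2 * t)) ^ p ≤ (2 * exp (-2)) ^ p * t ^ p := by
  rw [← mul_rpow (by positivity) ht₀.le]
  exact rpow_le_rpow_of_nonpos (by positivity)
    (two_mul_exp_neg_two_mul_le_one_sub_exp ht₀.le ht₁) hp

lemma exp_neg_div_one_sub_exp_le (ht₀ : 0 < t) (ht₁ : t ≤ 1) {r : ℝ} (hr : 0 ≤ r) :
    exp (-(exp (-t) * r) / (1 - exp (-2 * t))) ≤ exp (-r / (4 * t)) := by
  refine exp_le_exp.mpr ?_
  rw [div_le_div_iff₀ (one_sub_exp_neg_two_mul_pos ht₀) (by positivity)]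
  nlinarith [one_sub_exp_neg_two_mul_le ht₀.le ht₁]

lemma exp_div_one_add_exp_le (ht : 0 ≤ t) {r : ℝ} (hr : 0 ≤ r) :
    exp (exp (-t) * r / (1 + exp (-t))) ≤ exp (r / 2) := by
  refine exp_le_exp.mpr ?_
  have h_le_one : exp (-t) ≤ 1 := exp_le_one_iff.mpr (by linarith)
  rw [div_le_div_iff₀ (by positivity) two_pos]
  nlinarith

end Real

open Real in
theorem mehler_le {n : ℕ} {t : ℝ} (ht₀ : 0 < t) (ht₁ : t ≤ 1) (x y : EuclideanSpace ℝ (Fin n)) :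
    mehler n t x y ≤
      (2 * exp (-2)) ^ (-(n : ℝ) / 2) * t ^ (-(n : ℝ) / 2) * exp (-‖x - y‖ ^ 2 / (4 * t)) *
        exp ((‖x‖ ^ 2 + ‖y‖ ^ 2) / 2) := by
  have hp : -(n : ℝ) / 2 ≤ 0 := by have := n.cast_nonneg (α := ℝ); linarith
  unfold mehler
  gcongr ?_ * ?_ * ?_
  · exact one_sub_exp_neg_two_mul_rpow_le ht₀ ht₁ hp
  · exact exp_neg_div_one_sub_exp_le ht₀ ht₁ (by positivity)
  · exact exp_div_one_add_exp_le ht₀.le (by positivity)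

theorem stmt_4 (n : ℕ) : ∃ C : ℝ, 0 < C ∧
    ∀ (x y : EuclideanSpace ℝ (Fin n)) (t : ℝ), t ∈ Set.Ioc (0:ℝ) 1 →
      mehler n t x y ≤
        C * t ^ (-(n : ℝ) / 2) * Real.exp (-‖x - y‖ ^ 2 / (4 * t)) *
          Real.exp ((‖x‖ ^ 2 + ‖y‖ ^ 2) / 2) :=
  ⟨(2 * Real.exp (-2)) ^ (-(n : ℝ) / 2), by positivity,
    fun x y _ ht => mehler_le ht.1 ht.2 x y⟩
end
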